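/- arXiv:2502.18105 — 4 statements merged into one kernel-verified Lean document; each statement's English description precedes it below -/
import Mathlib

section
/- Let K be a unitary operator on a finite-dimensional complex Hilbert space H such that the inner automorphism ρ(O) = K O K† of B(H) satisfies the regularity condition ρ(O†) = (ρ⁻¹(O))† for all O ∈ B(H). Then K = exp(iθ) K† for some real number θ. -/
open ContinuousLinearMap in
/-- If the inner automorphism `ρ(O) = K O K†` of `B(H)` is regular
(`ρ(O†) = (ρ⁻¹(O))†`), with `K` unitary, then `K = exp(iθ) K†` for some real `θ`. -/
theorem stmt1 {H : Type*} [NormedAddCommGroup H] [InnerProductSpace ℂ H]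
    [FiniteDimensional ℂ H]
    (K : H →L[ℂ] H) (hK : K ∈ unitary (H →L[ℂ] H))
    (hreg : ∀ O : H →L[ℂ] H,
      K * adjoint O * adjoint K = adjoint (adjoint K * O * K)) :
    ∃ θ : ℝ, K = Complex.exp (θ * Complex.I) • adjoint K := by
  have hK1 : adjoint K * K = 1 := by
    have := hK.1; rwa [ContinuousLinearMap.star_eq_adjoint] at this
  have hK2 : K * adjoint K = 1 := by
    have := hK.2; rwa [ContinuousLinearMap.star_eq_adjoint] at this
  have e2 : ∀ X : H →L[ℂ] H, K * (adjoint K * X) = X := by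
    intro X; rw [← mul_assoc, hK2, one_mul]
  -- the regularity condition gives K B K† = K† B K for all B
  have hswap : ∀ B : H →L[ℂ] H, K * B * adjoint K = adjoint K * B * K := by
    intro B
    have h := hreg (adjoint B)
    simp only [← ContinuousLinearMap.star_eq_adjoint, star_mul, star_star,
      ← mul_assoc] at h ⊢
    exact h
  -- hence K² is central
  have hcomm : ∀ B : H →L[ℂ] H, K * K * B = B * (K * K) := by
    intro B
    have h := hswap B
    have h' : K * (B * adjoint K) = adjoint K * (B * K) := by
      simpa [mul_assoc] using h
    have h2 := congrArg (fun X => K * (X * K)) h'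
    simp only [mul_assoc] at h2
    rw [hK1, mul_one] at h2
    rw [e2 (B * (K * K))] at h2
    simpa [mul_assoc] using h2
  -- case: trivial space
  rcases subsingleton_or_nontrivial H with hs | hn
  · exact ⟨0, Subsingleton.elim _ _⟩
  -- pick a nonzero vector
  obtain ⟨v, hv⟩ := exists_ne (0 : H)
  set T := K * K with hT
  have hvv : (inner ℂ v v : ℂ) ≠ 0 := by
    simpa using (inner_self_ne_zero (𝕜 := ℂ)).mpr hv
  set c : ℂ := inner ℂ v (T v) / inner ℂ v v with hc
  -- K² = c • 1
  have hTw : ∀ w : H, T w = c • w := by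
    intro w
    set A : H →L[ℂ] H := (toSpanSingleton ℂ w).comp (innerSL ℂ v) with hA
    have hAx : ∀ x : H, A x = (inner ℂ v x : ℂ) • w := fun x => rfl
    have h := hcomm A
    have h2 := congrFun (congrArg (fun (X : H →L[ℂ] H) => (X : H → H)) h) v
    simp only [ContinuousLinearMap.mul_apply] at h2
    rw [hAx, hAx] at h2
    rw [map_smul] at h2
    have : T w = ((inner ℂ v v : ℂ))⁻¹ • ((inner ℂ v (T v) : ℂ) • w) := by
      rw [← h2, smul_smul, inv_mul_cancel₀ hvv, one_smul]
    rw [this, smul_smul, hc, div_eq_inv_mul]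
  -- K preserves norms
  have hnorm : ∀ x : H, ‖K x‖ = ‖x‖ := by
    intro x
    have hin : (inner ℂ (K x) (K x) : ℂ) = inner ℂ x x := by
      rw [← ContinuousLinearMap.adjoint_inner_left]
      have : adjoint K (K x) = x := by
        have := congrFun (congrArg (fun (X : H →L[ℂ] H) => (X : H → H)) hK1) x
        simpa using this
      rw [this]
    have h1 := inner_self_eq_norm_sq (𝕜 := ℂ) (K x)
    have h2 := inner_self_eq_norm_sq (𝕜 := ℂ) x
    have h3 : ‖K x‖ ^ 2 = ‖x‖ ^ 2 := by rw [← h1, ← h2, hin]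
    rw [← Real.sqrt_sq (norm_nonneg (K x)), ← Real.sqrt_sq (norm_nonneg x), h3]
  -- |c| = 1
  have habs : ‖c‖ = 1 := by
    have h1 : ‖T v‖ = ‖v‖ := by
      simp only [hT, ContinuousLinearMap.mul_apply, hnorm]
    have h2 : ‖T v‖ = ‖c‖ * ‖v‖ := by
      rw [hTw v, norm_smul]
    have hv' : ‖v‖ ≠ 0 := norm_ne_zero_iff.mpr hv
    have : ‖c‖ * ‖v‖ = 1 * ‖v‖ := by rw [one_mul, ← h2, h1]
    exact mul_right_cancel₀ hv' this
  have hexp : Complex.exp (c.arg * Complex.I) = c := by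
    have := Complex.norm_mul_exp_arg_mul_I c
    rwa [habs, Complex.ofReal_one, one_mul] at this
  have hT1 : T = c • (1 : H →L[ℂ] H) := by
    ext x; simpa using hTw x
  refine ⟨c.arg, ?_⟩
  calc K = T * adjoint K := by rw [hT, mul_assoc, hK2, mul_one]
    _ = (c • 1) * adjoint K := by rw [hT1]
    _ = c • adjoint K := by rw [smul_mul_assoc, one_mul]
    _ = Complex.exp (c.arg * Complex.I) • adjoint K := by rw [hexp]
end

section
/- Let K ∈ M_{2^m}(ℂ) be a unitary implementing ρ (ρ(x) = K x K†, where ρ(v)=v† on V and the commutant of V is ℂ·1). If ρ(conj(v)) = conj(ρ(v)) for all v ∈ V, then conj(K) = exp(iθ′) K for some real θ′. -/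
open Matrix in
/-- If the unitary `K` implements `ρ` (`ρ(v) = v†` on `V`, whose commutant is `ℂ·1`)
and `ρ(conj v) = conj(ρ v)` for all `v ∈ V`, then `conj K = exp(iθ′) K` for some real `θ′`. -/
theorem stmt9 (n : ℕ) (V : Submodule ℝ (Matrix (Fin n) (Fin n) ℂ))
    (K : Matrix (Fin n) (Fin n) ℂ)
    (hKu : K * Kᴴ = 1 ∧ Kᴴ * K = 1)
    (hρ : ∀ v ∈ V, K * v * Kᴴ = vᴴ)
    (hcomm : ∀ x : Matrix (Fin n) (Fin n) ℂ,
      (∀ v ∈ V, x * v = v * x) → ∃ c : ℂ, x = c • 1)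
    (hconj : ∀ v ∈ V,
      K * (v.map (starRingEnd ℂ)) * Kᴴ = (K * v * Kᴴ).map (starRingEnd ℂ)) :
    ∃ θ' : ℝ, K.map (starRingEnd ℂ) = Complex.exp (θ' * Complex.I) • K := by
  rcases Nat.eq_zero_or_pos n with hn | hn
  · subst hn
    exact ⟨0, Subsingleton.elim _ _⟩
  obtain ⟨hK1, hK2⟩ := hKu
  set f := starRingEnd ℂ with hf
  have hsemi : Function.Semiconj (f : ℂ → ℂ) star star := fun a => by
    simp [hf]
  have hmul : ∀ A B : Matrix (Fin n) (Fin n) ℂ,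
      (A * B).map f = A.map f * B.map f := fun A B => Matrix.map_mul
  have hmapmap : ∀ A : Matrix (Fin n) (Fin n) ℂ, (A.map f).map f = A := by
    intro A; ext i j; simp [hf]
  set U := K.map f with hU
  have hUH : Uᴴ = Kᴴ.map f := (Matrix.conjTranspose_map f hsemi).symm
  have hUU1 : U * Uᴴ = 1 := by
    rw [hU, hUH, ← hmul, hK1]
    ext i j; simp [hf, Matrix.one_apply]
  have hUU2 : Uᴴ * U = 1 := by
    rw [hU, hUH, ← hmul, hK2]
    ext i j; simp [hf, Matrix.one_apply]
  have key : ∀ v ∈ V, (Uᴴ * K) * v.map f = v.map f * (Uᴴ * K) := by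
    intro v hv
    have h2 : K * v.map f * Kᴴ = U * v.map f * Uᴴ := by
      rw [hconj v hv, hmul, hmul, hU, hUH]
    have e1 : Uᴴ * (K * v.map f * Kᴴ) * K = (Uᴴ * K) * v.map f := by
      simp only [mul_assoc, hK2, mul_one]
    have e2 : Uᴴ * (U * v.map f * Uᴴ) * K = v.map f * (Uᴴ * K) := by
      simp only [mul_assoc]
      rw [← mul_assoc Uᴴ U, hUU2, one_mul]
    rw [← e1, ← e2, h2]
  obtain ⟨c, hc⟩ := hcomm ((Uᴴ * K).map f) (fun v hv => by
    calc (Uᴴ * K).map f * v = ((Uᴴ * K) * v.map f).map f := by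
          simp only [hmul, hmapmap]
      _ = (v.map f * (Uᴴ * K)).map f := by rw [key v hv]
      _ = v * (Uᴴ * K).map f := by simp only [hmul, hmapmap])
  have hx : Uᴴ * K = (starRingEnd ℂ c) • 1 := by
    have := congrArg (fun A => A.map f) hc
    simp only [hmapmap] at this
    rw [this]
    ext i j
    by_cases h : i = j <;> simp [h, hf, Matrix.one_apply, Matrix.smul_apply, Matrix.map_apply]
  -- conjugate transpose: Kᴴ * U = c • 1
  have hxH : Kᴴ * U = c • 1 := by
    have := congrArg conjTranspose hx
    simpa [Matrix.conjTranspose_mul, Matrix.conjTranspose_smul] using this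
  have hUK : U = c • K := by
    calc U = (K * Kᴴ) * U := by rw [hK1, one_mul]
      _ = K * (Kᴴ * U) := by rw [mul_assoc]
      _ = K * (c • 1) := by rw [hxH]
      _ = c • K := by rw [Matrix.mul_smul, mul_one]
  -- |c| = 1
  have habs : starRingEnd ℂ c * c = 1 := by
    have h1 : (Uᴴ * K) * (Kᴴ * U) = 1 := by
      calc (Uᴴ * K) * (Kᴴ * U) = Uᴴ * (K * Kᴴ) * U := by
            simp only [mul_assoc]
        _ = 1 := by rw [hK1, mul_one, hUU2]
    rw [hx, hxH, smul_mul_assoc, mul_smul_comm, one_mul, smul_smul] at h1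
    have := congrFun (congrFun h1 ⟨0, hn⟩) ⟨0, hn⟩
    simpa [Matrix.one_apply] using this
  have hnorm : ‖c‖ = 1 := by
    have : Complex.normSq c = 1 := by
      have h3 : (↑(Complex.normSq c) : ℂ) = 1 := by
        rw [← Complex.mul_conj, mul_comm]; exact habs
      exact_mod_cast h3
    have h := Complex.sq_norm c
    rw [this] at h
    nlinarith [norm_nonneg c]
  refine ⟨c.arg, ?_⟩
  have : Complex.exp (↑c.arg * Complex.I) = c := by
    have := Complex.norm_mul_exp_arg_mul_I c
    rwa [hnorm, Complex.ofReal_one, one_mul] at this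
  rw [this]
  exact hUK
end

section
/- Let x ∈ Cl(V,g)^× implement an automorphism φ_x = Ad_x preserving V and satisfying φ_x(v)† = ρ(φ_x(v)) for all v ∈ V, where ρ = Ad_K with K unitary, K v K† = v†, and the commutant of V in Cl(V,g) is ℂ·1. Then x⁻¹ = α ρ(x†) for some real number α. -/
open Matrix in
/-- If the invertible `x` implements an automorphism preserving `V` and compatible with
the twist `ρ = Ad_K` (`ρ(v) = v†` on `V`, commutant of `V` is `ℂ·1`, `K = e^{iθ}K†`
unitary), then `x⁻¹ = α ρ(x†)` for some real `α`. -/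
theorem stmt12 (n : ℕ) (V : Submodule ℝ (Matrix (Fin n) (Fin n) ℂ))
    (K x y : Matrix (Fin n) (Fin n) ℂ)
    (hKu : K * Kᴴ = 1 ∧ Kᴴ * K = 1)
    (hKθ : ∃ θ : ℝ, K = Complex.exp (θ * Complex.I) • Kᴴ)
    (hρV : ∀ v ∈ V, K * v * Kᴴ = vᴴ)
    (hcomm : ∀ z : Matrix (Fin n) (Fin n) ℂ,
      (∀ v ∈ V, z * v = v * z) → ∃ c : ℂ, z = c • 1)
    (hxy : x * y = 1 ∧ y * x = 1)
    (hxV : ∀ v ∈ V, x * v * y ∈ V)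
    (hadj : ∀ v ∈ V, (x * v * y)ᴴ = K * (x * v * y) * Kᴴ) :
    ∃ α : ℝ, y = (α : ℂ) • (K * xᴴ * Kᴴ) := by
  obtain ⟨hK1, hK2⟩ := hKu
  obtain ⟨hxy1, hxy2⟩ := hxy
  obtain ⟨θ, hθ⟩ := hKθ
  have hyx1 : yᴴ * xᴴ = 1 := by rw [← conjTranspose_mul, hxy1, conjTranspose_one]
  have hyx2 : xᴴ * yᴴ = 1 := by rw [← conjTranspose_mul, hxy2, conjTranspose_one]
  -- cancellation helpers (right-associated)
  have c1 : ∀ a : Matrix (Fin n) (Fin n) ℂ, K * (Kᴴ * a) = a := fun a => by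
    rw [← mul_assoc, hK1, one_mul]
  have c2 : ∀ a : Matrix (Fin n) (Fin n) ℂ, Kᴴ * (K * a) = a := fun a => by
    rw [← mul_assoc, hK2, one_mul]
  have c3 : ∀ a : Matrix (Fin n) (Fin n) ℂ, x * (y * a) = a := fun a => by
    rw [← mul_assoc, hxy1, one_mul]
  have c4 : ∀ a : Matrix (Fin n) (Fin n) ℂ, y * (x * a) = a := fun a => by
    rw [← mul_assoc, hxy2, one_mul]
  have c5 : ∀ a : Matrix (Fin n) (Fin n) ℂ, yᴴ * (xᴴ * a) = a := fun a => by
    rw [← mul_assoc, hyx1, one_mul]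
  have c6 : ∀ a : Matrix (Fin n) (Fin n) ℂ, xᴴ * (yᴴ * a) = a := fun a => by
    rw [← mul_assoc, hyx2, one_mul]
  have hw : ∀ v ∈ V, (y * Kᴴ * yᴴ * K) * v = v * (y * Kᴴ * yᴴ * K) := by
    intro v hv
    have E : yᴴ * (K * v * Kᴴ) * xᴴ = K * (x * v * y) * Kᴴ := by
      rw [hρV v hv, ← hadj v hv]
      simp [conjTranspose_mul, mul_assoc]
    have E2 : yᴴ * (K * v) = K * (x * (v * (y * (Kᴴ * (yᴴ * K))))) := by
      have := congrArg (· * (yᴴ * K)) E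
      simpa [mul_assoc, c1, c2, c3, c4, c5, c6, hK1, hK2, hxy1, hxy2, hyx1, hyx2] using this
    calc (y * Kᴴ * yᴴ * K) * v = y * (Kᴴ * (yᴴ * (K * v))) := by
          simp [mul_assoc]
      _ = y * (Kᴴ * (K * (x * (v * (y * (Kᴴ * (yᴴ * K))))))) := by rw [E2]
      _ = v * (y * Kᴴ * yᴴ * K) := by
          rw [c2, c4]
          simp [mul_assoc]
  obtain ⟨c, hc⟩ := hcomm _ hw
  have h5 : y * Kᴴ * yᴴ = c • Kᴴ := by
    have := congrArg (· * Kᴴ) hc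
    simpa [mul_assoc, hK1, smul_mul_assoc] using this
  have h6 : y * K * yᴴ = c • K := by
    rw [hθ]
    rw [mul_smul_comm, smul_mul_assoc, h5, smul_comm]
  have h7 : y * K * yᴴ = star c • K := by
    have h := congrArg conjTranspose hc
    simp only [conjTranspose_mul, conjTranspose_smul, conjTranspose_one,
      conjTranspose_conjTranspose] at h
    have h' := congrArg (K * ·) h
    simp only [c1] at h'
    rw [mul_assoc, h']
    simp [mul_smul_comm]
  by_cases hK0 : K = 0
  · refine ⟨0, ?_⟩
    have hy0 : y = 0 := by
      have : y * (K * Kᴴ) = y * 1 := by rw [hK1]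
      simpa [hK0] using this.symm
    simp [hy0, hK0]
  · have hcc : starRingEnd ℂ c = c := by
      have h0 : (c - star c) • K = 0 := by
        rw [sub_smul, ← h6, ← h7, sub_self]
      rcases smul_eq_zero.mp h0 with h | h
      · have h1 := sub_eq_zero.mp h
        simpa [Complex.star_def] using h1.symm
      · exact absurd h hK0
    refine ⟨c.re, ?_⟩
    have hcre : (c.re : ℂ) = c := Complex.conj_eq_iff_re.mp hcc
    rw [hcre]
    have : y * K * (yᴴ * xᴴ) = c • K * xᴴ := by rw [← mul_assoc, h6]
    rw [hyx1, mul_one] at this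
    calc y = y * K * Kᴴ := by rw [mul_assoc, hK1, mul_one]
      _ = c • K * xᴴ * Kᴴ := by rw [this]
      _ = c • (K * xᴴ * Kᴴ) := by simp [smul_mul_assoc]
end

section
/- Let D_p = D ⊗ 1_F + O ⊗ D_F on H ⊗ H_F, with J_p = J ⊗ J_F and Γ_p = Γ ⊗ Γ_F. Suppose D is self-adjoint with J D = ε₁ D J and Γ D = ε₃ D Γ, and D_F self-adjoint with J_F D_F = D_F J_F and Γ_F D_F = −D_F Γ_F, with D and D_F nonzero. If D_p is self-adjoint, J_p D_p = ε₁^p D_p J_p for some sign ε₁^p, and Γ_p D_p = ε₃^p D_p Γ_p for some sign ε₃^p, then O = O†, J O = ε₁ O J, and Γ O = −ε₃ O Γ. -/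
open Matrix Kronecker

section helpers

variable {ι ιF : Type*} [Fintype ι] [Fintype ιF] [DecidableEq ι] [DecidableEq ιF]

lemma kron_conjT (A : Matrix ι ι ℂ) (B : Matrix ιF ιF ℂ) :
    (A ⊗ₖ B)ᴴ = Aᴴ ⊗ₖ Bᴴ := by
  ext ⟨i, k⟩ ⟨j, l⟩
  simp [Matrix.conjTranspose_apply, Matrix.kronecker_apply, mul_comm]

lemma kron_map (A : Matrix ι ι ℂ) (B : Matrix ιF ιF ℂ) :
    (A ⊗ₖ B).map (starRingEnd ℂ) = A.map (starRingEnd ℂ) ⊗ₖ B.map (starRingEnd ℂ) := by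
  ext ⟨i, k⟩ ⟨j, l⟩
  simp [Matrix.kronecker_apply]

lemma kron_sub (A C : Matrix ι ι ℂ) (B : Matrix ιF ιF ℂ) :
    (A - C) ⊗ₖ B = A ⊗ₖ B - C ⊗ₖ B := by
  ext ⟨i, k⟩ ⟨j, l⟩
  simp [Matrix.kronecker_apply, sub_mul]

lemma kron_neg_right (A : Matrix ι ι ℂ) (B : Matrix ιF ιF ℂ) :
    A ⊗ₖ (-B) = (-A) ⊗ₖ B := by
  ext ⟨i, k⟩ ⟨j, l⟩
  simp [Matrix.kronecker_apply]

lemma kron_indep (A C : Matrix ι ι ℂ) (B E : Matrix ιF ιF ℂ)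
    (hindep : ∀ a c : ℂ, a • B + c • E = 0 → a = 0 ∧ c = 0)
    (h : A ⊗ₖ B + C ⊗ₖ E = 0) : A = 0 ∧ C = 0 := by
  have key : ∀ i j, A i j = 0 ∧ C i j = 0 := by
    intro i j
    refine hindep (A i j) (C i j) ?_
    ext k l
    have := congrFun (congrFun h (i, k)) (j, l)
    simpa [Matrix.kronecker_apply] using this
  constructor <;> ext i j <;> simp [(key i j).1, (key i j).2]

end helpers

open Matrix Kronecker in
/-- If the product triple data `D_p = D ⊗ 1 + O ⊗ D_F`, `J_p = J ⊗ J_F`,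
`Γ_p = Γ ⊗ Γ_F` satisfies the spectral triple algebraic constraints (self-adjointness,
`J_p D_p = ε₁^p D_p J_p`, `Γ_p D_p = ε₃^p D_p Γ_p` for some signs), with `J D = ε₁ D J`,
`Γ D = ε₃ D Γ`, `J_F D_F = D_F J_F`, `Γ_F D_F = -D_F Γ_F`, then `O = O†`,
`J O = ε₁ O J`, and `Γ O = -ε₃ O Γ`.  (Antiunitaries `J = Jm ∘ conj` are encoded by
their matrices `Jm`, so `J A = B J` reads `Jm * conj(A) = B * Jm`.) -/
theorem stmt18 {ι ιF : Type*} [Fintype ι] [Fintype ιF] [DecidableEq ι] [DecidableEq ιF]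
    (D O Γm Jm : Matrix ι ι ℂ) (DF ΓF JF : Matrix ιF ιF ℂ)
    (ε₁ ε₃ : ℂ) (hε₁ : ε₁ = 1 ∨ ε₁ = -1) (hε₃ : ε₃ = 1 ∨ ε₃ = -1)
    (hD : Dᴴ = D) (hDne : D ≠ 0)
    (hDF : DFᴴ = DF) (hDFne : DF ≠ 0)
    (hJu : Jmᴴ * Jm = 1) (hJFu : JFᴴ * JF = 1)
    (hΓ : Γmᴴ = Γm) (hΓ2 : Γm * Γm = 1) (hΓF : ΓFᴴ = ΓF) (hΓF2 : ΓF * ΓF = 1)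
    (hJD : Jm * D.map (starRingEnd ℂ) = ε₁ • (D * Jm))
    (hΓD : Γm * D = ε₃ • (D * Γm))
    (hJFDF : JF * DF.map (starRingEnd ℂ) = DF * JF)
    (hΓFDF : ΓF * DF = -(DF * ΓF))
    (hPsa : (D ⊗ₖ (1 : Matrix ιF ιF ℂ) + O ⊗ₖ DF)ᴴ
      = D ⊗ₖ (1 : Matrix ιF ιF ℂ) + O ⊗ₖ DF)
    (hPJ : ∃ ε : ℂ, (ε = 1 ∨ ε = -1) ∧
      (Jm ⊗ₖ JF) * (D ⊗ₖ (1 : Matrix ιF ιF ℂ) + O ⊗ₖ DF).map (starRingEnd ℂ)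
        = ε • ((D ⊗ₖ (1 : Matrix ιF ιF ℂ) + O ⊗ₖ DF) * (Jm ⊗ₖ JF)))
    (hPΓ : ∃ ε : ℂ, (ε = 1 ∨ ε = -1) ∧
      (Γm ⊗ₖ ΓF) * (D ⊗ₖ (1 : Matrix ιF ιF ℂ) + O ⊗ₖ DF)
        = ε • ((D ⊗ₖ (1 : Matrix ιF ιF ℂ) + O ⊗ₖ DF) * (Γm ⊗ₖ ΓF))) :
    Oᴴ = O ∧ Jm * O.map (starRingEnd ℂ) = ε₁ • (O * Jm) ∧
      Γm * O = (-ε₃) • (O * Γm) := by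
  -- ιF is nonempty
  have hne : Nonempty ιF := by
    by_contra h
    exact hDFne (by ext i j; exact absurd ⟨i⟩ h)
  obtain ⟨k₀⟩ := hne
  have hΓFne : ΓF ≠ 0 := by
    intro h
    have : (1 : Matrix ιF ιF ℂ) = 0 := by rw [← hΓF2, h, mul_zero]
    have := congrFun (congrFun this k₀) k₀
    simp [Matrix.one_apply_eq] at this
  have hJu' : Jm * Jmᴴ = 1 := mul_eq_one_comm.mp hJu
  have hJFu' : JF * JFᴴ = 1 := mul_eq_one_comm.mp hJFu
  -- linear independence of 1 and DF
  have hindep1 : ∀ a c : ℂ, a • (1 : Matrix ιF ιF ℂ) + c • DF = 0 → a = 0 ∧ c = 0 := by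
    intro a c h
    have h2 : a • (1 : Matrix ιF ιF ℂ) - c • DF = 0 := by
      have e : ΓF * (a • (1 : Matrix ιF ιF ℂ) + c • DF) * ΓF
          = a • (1 : Matrix ιF ιF ℂ) - c • DF := by
        rw [Matrix.mul_add, Matrix.mul_smul, Matrix.mul_one, Matrix.mul_smul, hΓFDF,
          Matrix.add_mul, Matrix.smul_mul, Matrix.smul_mul, hΓF2, Matrix.neg_mul,
          Matrix.mul_assoc, hΓF2, Matrix.mul_one, smul_neg, ← sub_eq_add_neg]
      rw [← e, h, Matrix.mul_zero, Matrix.zero_mul]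
    have ha : (2 * a) • (1 : Matrix ιF ιF ℂ) = 0 := by
      have h3 := congrArg₂ (· + ·) h h2
      simp only [add_zero] at h3
      rw [add_add_sub_cancel, ← two_smul ℂ, smul_smul] at h3
      exact h3
    have ha0 : a = 0 := by
      have h2a : (2 : ℂ) * a = 0 := by
        simpa [Matrix.one_apply_eq] using congrFun (congrFun ha k₀) k₀
      exact (mul_eq_zero.mp h2a).resolve_left two_ne_zero
    refine ⟨ha0, ?_⟩
    rw [ha0, zero_smul, zero_add] at h
    rcases smul_eq_zero.mp h with h' | h'
    · exact h'
    · exact absurd h' hDFne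
  -- linear independence of M and DF*M for coisometric M
  have hindepM : ∀ (M : Matrix ιF ιF ℂ), M * Mᴴ = 1 →
      ∀ a c : ℂ, a • M + c • (DF * M) = 0 → a = 0 ∧ c = 0 := by
    intro M hM a c h
    refine hindep1 a c ?_
    have := congrArg (fun X => X * Mᴴ) h
    simpa [Matrix.add_mul, Matrix.smul_mul, Matrix.mul_assoc, hM] using this
  have hDJm : D * Jm ≠ 0 := by
    intro h
    refine hDne ?_
    have := congrArg (fun X => X * Jmᴴ) h
    simpa [Matrix.mul_assoc, hJu'] using this
  have hΓΓ' : Γm * Γmᴴ = 1 := by rw [hΓ]; exact hΓ2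
  have hΓFΓF' : ΓF * ΓFᴴ = 1 := by rw [hΓF]; exact hΓF2
  have hDΓm : D * Γm ≠ 0 := by
    intro h
    refine hDne ?_
    have := congrArg (fun X => X * Γmᴴ) h
    simpa [Matrix.mul_assoc, hΓΓ'] using this
  -- Part 1 : O is self-adjoint
  have hO : Oᴴ = O := by
    have h1 : D ⊗ₖ (1 : Matrix ιF ιF ℂ) + Oᴴ ⊗ₖ DF
        = D ⊗ₖ (1 : Matrix ιF ιF ℂ) + O ⊗ₖ DF := by
      have := hPsa
      rwa [Matrix.conjTranspose_add, kron_conjT, kron_conjT, Matrix.conjTranspose_one,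
        hD, hDF] at this
    have h2 : (Oᴴ - O) ⊗ₖ DF = 0 := by
      rw [kron_sub, add_left_cancel h1, sub_self]
    have h3 : (0 : Matrix ι ι ℂ) ⊗ₖ (1 : Matrix ιF ιF ℂ) + (Oᴴ - O) ⊗ₖ DF = 0 := by
      rw [Matrix.zero_kronecker, zero_add, h2]
    have h4 := kron_indep _ _ _ _ hindep1 h3
    rw [← sub_eq_zero]
    exact h4.2
  refine ⟨hO, ?_, ?_⟩
  -- Part 2 : J-compatibility
  · obtain ⟨ε, hεs, heq⟩ := hPJ
    have heq' : (ε₁ • (D * Jm)) ⊗ₖ JF + (Jm * O.map (starRingEnd ℂ)) ⊗ₖ (DF * JF)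
        = (ε • (D * Jm)) ⊗ₖ JF + (ε • (O * Jm)) ⊗ₖ (DF * JF) := by
      have lhs : (Jm ⊗ₖ JF) * (D ⊗ₖ (1 : Matrix ιF ιF ℂ) + O ⊗ₖ DF).map (starRingEnd ℂ)
          = (ε₁ • (D * Jm)) ⊗ₖ JF + (Jm * O.map (starRingEnd ℂ)) ⊗ₖ (DF * JF) := by
        rw [Matrix.map_add _ (fun a b => map_add (starRingEnd ℂ) a b), kron_map, kron_map, Matrix.mul_add,
          ← Matrix.mul_kronecker_mul, ← Matrix.mul_kronecker_mul]
        congr 1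
        · rw [hJD]
          congr 1
          ext k l
          simp
        · rw [hJFDF]
      have rhs : ε • ((D ⊗ₖ (1 : Matrix ιF ιF ℂ) + O ⊗ₖ DF) * (Jm ⊗ₖ JF))
          = (ε • (D * Jm)) ⊗ₖ JF + (ε • (O * Jm)) ⊗ₖ (DF * JF) := by
        rw [Matrix.add_mul, ← Matrix.mul_kronecker_mul, ← Matrix.mul_kronecker_mul,
          smul_add, Matrix.smul_kronecker, Matrix.smul_kronecker, Matrix.one_mul]
      rw [← lhs, ← rhs]; exact heq
    have key : ((ε₁ - ε) • (D * Jm)) ⊗ₖ JF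
        + (Jm * O.map (starRingEnd ℂ) - ε • (O * Jm)) ⊗ₖ (DF * JF) = 0 := by
      rw [sub_smul, kron_sub, kron_sub, sub_add_sub_comm, heq', sub_self]
    have h5 := kron_indep _ _ _ _ (hindepM JF hJFu') key
    have hε : ε₁ - ε = 0 := by
      rcases smul_eq_zero.mp h5.1 with h' | h'
      · exact h'
      · exact absurd h' hDJm
    have := h5.2
    rw [sub_eq_zero] at this
    rw [this, sub_eq_zero.mp hε]
  -- Part 3 : Γ-compatibility
  · obtain ⟨ε, hεs, heq⟩ := hPΓ
    have heq' : (ε₃ • (D * Γm)) ⊗ₖ ΓF + (-(Γm * O)) ⊗ₖ (DF * ΓF)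
        = (ε • (D * Γm)) ⊗ₖ ΓF + (ε • (O * Γm)) ⊗ₖ (DF * ΓF) := by
      have lhs : (Γm ⊗ₖ ΓF) * (D ⊗ₖ (1 : Matrix ιF ιF ℂ) + O ⊗ₖ DF)
          = (ε₃ • (D * Γm)) ⊗ₖ ΓF + (-(Γm * O)) ⊗ₖ (DF * ΓF) := by
        rw [Matrix.mul_add, ← Matrix.mul_kronecker_mul, ← Matrix.mul_kronecker_mul]
        congr 1
        · rw [hΓD, Matrix.mul_one]
        · rw [hΓFDF, kron_neg_right]
      have rhs : ε • ((D ⊗ₖ (1 : Matrix ιF ιF ℂ) + O ⊗ₖ DF) * (Γm ⊗ₖ ΓF))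
          = (ε • (D * Γm)) ⊗ₖ ΓF + (ε • (O * Γm)) ⊗ₖ (DF * ΓF) := by
        rw [Matrix.add_mul, ← Matrix.mul_kronecker_mul, ← Matrix.mul_kronecker_mul,
          smul_add, Matrix.smul_kronecker, Matrix.smul_kronecker, Matrix.one_mul]
      rw [← lhs, ← rhs]; exact heq
    have key : ((ε₃ - ε) • (D * Γm)) ⊗ₖ ΓF
        + (-(Γm * O) - ε • (O * Γm)) ⊗ₖ (DF * ΓF) = 0 := by
      rw [sub_smul, kron_sub, kron_sub, sub_add_sub_comm, heq', sub_self]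
    have h5 := kron_indep _ _ _ _ (hindepM ΓF hΓFΓF') key
    have hε : ε₃ = ε := sub_eq_zero.mp (by
      rcases smul_eq_zero.mp h5.1 with h' | h'
      · exact h'
      · exact absurd h' hDΓm)
    have := h5.2
    rw [sub_eq_zero] at this
    rw [hε, neg_smul, ← this, neg_neg]
end
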